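/- arXiv:2004.00155 — 6 statements merged into one kernel-verified Lean document; each statement's English description precedes it below -/
import Mathlib

section
/- Let ω ∈ ℝ and K, T > 0 satisfy ω ≤ 2KT. Then f̄ is a single-well function with well at 1/2: for every s ∈ [0,1] with s ≠ 1/2 one has f̄(s) > f̄(1/2). -/
/-!
With the binary entropy `H`, `f̄(s) = ω s (1 - s) - K T H(s)`, so
`f̄(s) - f̄(1/2) = K T (log 2 - H(s)) - ω (s - 1/2)²`. The entropy gap obeys the strict
Pinsker-type bound `log 2 - H(s) > 2 (s - 1/2)²` for `s ≠ 1/2`, which wins against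
`ω (s - 1/2)²` as soon as `ω ≤ 2 K T`. By symmetry and monotonicity that bound reduces to
`log s - log (1 - s) > 2 (2 s - 1)` on `(1/2, 1)`, i.e. `artanh x > x` for `x = 2 s - 1`.
-/

/-- The chemical free energy density `f̄(s) = ω s(1-s) + K T (s log s + (1-s) log (1-s))`.
Since `Real.log 0 = 0`, this formula automatically realizes the continuous extension
`f̄(0) = f̄(1) = 0`. -/
noncomputable def fbar (ω K T : ℝ) (s : ℝ) : ℝ :=
  ω * s * (1 - s) + K * T * (s * Real.log s + (1 - s) * Real.log (1 - s))

open Real Set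

lemma two_mul_two_mul_sub_one_lt_log_sub_log_one_sub {p : ℝ} (hp₀ : 2⁻¹ < p) (hp₁ : p < 1) :
    2 * (2 * p - 1) < log p - log (1 - p) := by
  set x := 2 * p - 1 with hx_def
  have hx₀ : 0 < x := by linarith
  have hseries :=
    hasSum_log_sub_log_of_abs_lt_one (abs_lt.2 ⟨by linarith, by linarith⟩ : |x| < 1)
  have hpartial := sum_le_hasSum (Finset.range 2) (fun k _ => by positivity) hseries
  have hlog : log (1 + x) - log (1 - x) = log p - log (1 - p) := by
    rw [show 1 + x = 2 * p by ring, show 1 - x = 2 * (1 - p) by ring,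
      log_mul two_ne_zero (by linarith), log_mul two_ne_zero (by linarith)]
    ring
  have hcube : 0 < x ^ 3 := by positivity
  simp only [Finset.sum_range_succ, Finset.sum_range_zero, Nat.cast_zero, Nat.cast_one] at hpartial
  linarith

lemma two_mul_sq_sub_two_inv_lt_log_two_sub_binEntropy {p : ℝ} (hp₀ : 0 ≤ p) (hp₁ : p ≤ 1)
    (hp : p ≠ 2⁻¹) : 2 * (p - 2⁻¹) ^ 2 < log 2 - binEntropy p := by
  wlog hp_gt : 2⁻¹ < p generalizing p
  · have hp_lt : p < 2⁻¹ := lt_of_le_of_ne (not_lt.1 hp_gt) hp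
    have := this (p := 1 - p) (by linarith) (by linarith) (ne_of_gt (by linarith)) (by linarith)
    rw [binEntropy_one_sub] at this
    linarith
  let g : ℝ → ℝ := fun q => log 2 - binEntropy q - 2 * (q - 2⁻¹) ^ 2
  have hg : StrictMonoOn g (Icc 2⁻¹ 1) := by
    refine strictMonoOn_of_deriv_pos (convex_Icc _ _) (by fun_prop) fun q hq => ?_
    rw [interior_Icc] at hq
    have hderiv : HasDerivAt g (log q - log (1 - q) - 2 * (2 * (q - 2⁻¹))) q := by
      have hsq : HasDerivAt (fun q : ℝ => 2 * (q - 2⁻¹) ^ 2) (2 * (2 * (q - 2⁻¹))) q := by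
        simpa using (((hasDerivAt_id' q).sub_const 2⁻¹).pow 2).const_mul 2
      exact (((hasDerivAt_binEntropy (by linarith [hq.1]) hq.2.ne).const_sub (log 2)).sub
        hsq).congr_deriv (by ring)
    rw [hderiv.deriv]
    linarith [two_mul_two_mul_sub_one_lt_log_sub_log_one_sub hq.1 hq.2]
  have := hg (left_mem_Icc.2 (by norm_num)) ⟨hp_gt.le, hp₁⟩ hp_gt
  simp only [g, binEntropy_two_inv] at this
  linarith

lemma fbar_eq_sub_binEntropy (ω K T s : ℝ) :
    fbar ω K T s = ω * s * (1 - s) - K * T * binEntropy s := by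
  simp only [fbar, binEntropy, log_inv]
  ring

/-- If `ω ≤ 2KT` then `f̄` is a single-well function with well at `1/2`. -/
theorem single_well_of_omega_le (ω K T : ℝ) (hK : 0 < K) (hT : 0 < T)
    (hω : ω ≤ 2 * K * T) :
    ∀ s ∈ Set.Icc (0 : ℝ) 1, s ≠ 1 / 2 → fbar ω K T (1 / 2) < fbar ω K T s := by
  intro s hs hne
  rw [one_div] at hne ⊢
  have hgap := two_mul_sq_sub_two_inv_lt_log_two_sub_binEntropy hs.1 hs.2 hne
  have hdiff : fbar ω K T s - fbar ω K T 2⁻¹ =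
      K * T * (log 2 - binEntropy s) - ω * (s - 2⁻¹) ^ 2 := by
    rw [fbar_eq_sub_binEntropy, fbar_eq_sub_binEntropy, binEntropy_two_inv]
    ring
  linarith [mul_lt_mul_of_pos_left hgap (mul_pos hK hT),
    mul_le_mul_of_nonneg_right hω (sq_nonneg (s - 2⁻¹))]
end

section
/- Let ω ∈ ℝ and K, T > 0 satisfy ω > 2KT. Then there exists μ0 ∈ (0,1/2) such that f̄(μ0) = f̄(1−μ0) and f̄(s) > f̄(μ0) for every s ∈ [0,1] with s ∉ {μ0, 1−μ0}; that is, f̄ attains its minimum over [0,1] exactly at the two points μ0 and μ1 := 1−μ0. -/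
open Real Set Filter Topology

section StrictConcave

variable {𝕜 β : Type*} [Field 𝕜] [LinearOrder 𝕜] [IsStrictOrderedRing 𝕜] [AddCommMonoid β]
  [LinearOrder β] [IsOrderedAddMonoid β] [Module 𝕜 β] [PosSMulStrictMono 𝕜 β]
  {s : Set 𝕜} {f : 𝕜 → β} {a b x : 𝕜}

theorem StrictConcaveOn.lt_apply_of_mem_Ioo (hf : StrictConcaveOn 𝕜 s f) (ha : a ∈ s) (hb : b ∈ s)
    (hfab : f a = f b) (hx : x ∈ Ioo a b) : f a < f x := by
  have := hf.lt_on_openSegment ha hb (hx.1.trans hx.2).ne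
    (by rwa [openSegment_eq_Ioo (hx.1.trans hx.2)])
  rwa [← hfab, min_self] at this

theorem StrictConcaveOn.apply_lt_of_lt (hf : StrictConcaveOn 𝕜 s f) (hx : x ∈ s) (hb : b ∈ s)
    (hfab : f a = f b) (hxa : x < a) (hab : a < b) : f x < f a := by
  have := hf.lt_on_openSegment hx hb (hxa.trans hab).ne
    (by rw [openSegment_eq_Ioo (hxa.trans hab)]; exact ⟨hxa, hab⟩)
  rw [← hfab, min_lt_iff] at this
  exact this.resolve_right (lt_irrefl _)

end StrictConcave

theorem HasDerivAt.eventually_nhdsLT_lt_of_neg {f : ℝ → ℝ} {f' a : ℝ} (hf : HasDerivAt f f' a)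
    (hf' : f' < 0) : ∀ᶠ x in 𝓝[<] a, f a < f x := by
  have hslope := (hasDerivAt_iff_tendsto_slope.mp hf).mono_left (nhdsLT_le_nhdsNE a)
  filter_upwards [hslope.eventually (gt_mem_nhds hf'), self_mem_nhdsWithin] with x hneg hx
  rw [slope_def_field, div_lt_iff_of_neg (sub_neg.mpr hx), zero_mul, sub_pos] at hneg
  exact hneg

theorem lt_apply_of_strictAntiOn_of_strictMonoOn {α β : Type*} [LinearOrder α] [Preorder β]
    {f : α → β} {a m b x : α} (hanti : StrictAntiOn f (Icc a m)) (hmono : StrictMonoOn f (Icc m b))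
    (hx : x ∈ Icc a b) (hxm : x ≠ m) : f m < f x := by
  rcases hxm.lt_or_gt with hlt | hgt
  · exact hanti ⟨hx.1, hlt.le⟩ ⟨hx.1.trans hlt.le, le_rfl⟩ hlt
  · exact hmono ⟨le_rfl, hgt.le.trans hx.2⟩ ⟨hgt.le, hx.2⟩ hgt

theorem fbar_one_sub (ω K T s : ℝ) : fbar ω K T (1 - s) = fbar ω K T s := by
  rw [fbar, fbar, sub_sub_cancel]
  ring

theorem continuous_fbar (ω K T : ℝ) : Continuous (fbar ω K T) := by
  unfold fbar
  fun_prop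

noncomputable def fbarDeriv (ω K T s : ℝ) : ℝ :=
  ω * (1 - 2 * s) + K * T * (log s - log (1 - s))

section Derivatives

variable {ω K T s : ℝ}

theorem hasDerivAt_fbar (hs₀ : 0 < s) (hs₁ : s < 1) :
    HasDerivAt (fbar ω K T) (fbarDeriv ω K T s) s := by
  have hsub : HasDerivAt (fun x : ℝ => 1 - x) (-1) s := by
    simpa using (hasDerivAt_id s).const_sub 1
  have hquad : HasDerivAt (fun x => ω * x * (1 - x)) (ω * 1 * (1 - s) + ω * s * (-1)) s :=
    ((hasDerivAt_id s).const_mul ω).mul hsub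
  have hent := (hasDerivAt_mul_log hs₀.ne').add
    ((hasDerivAt_mul_log (sub_pos.mpr hs₁).ne').comp s hsub)
  refine (hquad.add (hent.const_mul (K * T))).congr_deriv ?_
  unfold fbarDeriv
  ring

theorem hasDerivAt_fbarDeriv (hs₀ : 0 < s) (hs₁ : s < 1) :
    HasDerivAt (fbarDeriv ω K T) (K * T / (s * (1 - s)) - 2 * ω) s := by
  have hsub : HasDerivAt (fun x : ℝ => 1 - x) (-1) s := by
    simpa using (hasDerivAt_id s).const_sub 1
  have hlin : HasDerivAt (fun x => ω * (1 - 2 * x)) (ω * (-2)) s := by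
    simpa using (((hasDerivAt_id s).const_mul 2).const_sub 1).const_mul ω
  have hlog := (hasDerivAt_log hs₀.ne').sub ((hasDerivAt_log (sub_pos.mpr hs₁).ne').comp s hsub)
  refine (hlin.add (hlog.const_mul (K * T))).congr_deriv ?_
  field_simp [hs₀.ne', (sub_pos.mpr hs₁).ne']
  ring

end Derivatives

theorem fbarDeriv_half (ω K T : ℝ) : fbarDeriv ω K T (1 / 2) = 0 := by
  norm_num [fbarDeriv]

theorem continuousOn_fbarDeriv (ω K T : ℝ) : ContinuousOn (fbarDeriv ω K T) (Ioo 0 1) :=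
  fun _ hs => (hasDerivAt_fbarDeriv hs.1 hs.2).continuousAt.continuousWithinAt

theorem strictConcaveOn_fbarDeriv (ω : ℝ) {K T : ℝ} (hKT : 0 < K * T) :
    StrictConcaveOn ℝ (Ioc 0 (1 / 2)) (fbarDeriv ω K T) := by
  have hIoc : Ioc (0 : ℝ) (1 / 2) ⊆ Ioo 0 1 := fun s hs => ⟨hs.1, by linarith [hs.2]⟩
  refine StrictAntiOn.strictConcaveOn_of_deriv (convex_Ioc _ _)
    ((continuousOn_fbarDeriv ω K T).mono hIoc) ?_
  rw [interior_Ioc]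
  intro x hx y hy hxy
  rw [(hasDerivAt_fbarDeriv hx.1 (by linarith [hx.2])).deriv,
    (hasDerivAt_fbarDeriv hy.1 (by linarith [hy.2])).deriv, sub_lt_sub_iff_right]
  have hxy' : x * (1 - x) < y * (1 - y) := by nlinarith [hx.2, hy.2]
  exact div_lt_div_of_pos_left hKT (mul_pos hx.1 (by linarith [hx.2])) hxy'

theorem tendsto_fbarDeriv_nhdsGT_zero (ω : ℝ) {K T : ℝ} (hKT : 0 < K * T) :
    Tendsto (fbarDeriv ω K T) (𝓝[>] 0) atBot := by
  have hlog : Tendsto (fun s => K * T * log s) (𝓝[>] 0) atBot :=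
    tendsto_log_nhdsGT_zero.const_mul_atBot hKT
  have hrest : Tendsto (fun s => ω * (1 - 2 * s) - K * T * log (1 - s)) (𝓝[>] 0)
      (𝓝 (ω * (1 - 2 * 0) - K * T * log (1 - 0))) :=
    tendsto_nhdsWithin_of_tendsto_nhds (ContinuousAt.tendsto (by fun_prop (disch := norm_num)))
  convert hlog.atBot_add hrest using 1
  ext s
  rw [fbarDeriv]
  ring

theorem exists_fbarDeriv_eq_zero {ω K T : ℝ} (hKT : 0 < K * T) (hω : 2 * K * T < ω) :
    ∃ μ ∈ Ioo 0 (1 / 2), fbarDeriv ω K T μ = 0 := by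
  have hderiv : HasDerivAt (fbarDeriv ω K T) (4 * K * T - 2 * ω) (1 / 2) := by
    convert hasDerivAt_fbarDeriv (ω := ω) (K := K) (T := T) (by norm_num : (0 : ℝ) < 1 / 2)
      (by norm_num) using 1
    ring
  obtain ⟨b, hgb, hb⟩ := ((hderiv.eventually_nhdsLT_lt_of_neg (by linarith)).and
    (Ioo_mem_nhdsLT (by norm_num : (0 : ℝ) < 1 / 2))).exists
  obtain ⟨a, hga, ha⟩ := (((tendsto_fbarDeriv_nhdsGT_zero ω hKT).eventually_lt_atBot 0).and
    (Ioo_mem_nhdsGT hb.1)).exists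
  obtain ⟨μ, hμ, hgμ⟩ := intermediate_value_Ioo ha.2.le
    ((continuousOn_fbarDeriv ω K T).mono fun s hs => ⟨ha.1.trans_le hs.1, by linarith [hs.2, hb.2]⟩)
    ⟨hga, fbarDeriv_half ω K T ▸ hgb⟩
  exact ⟨μ, ⟨ha.1.trans hμ.1, hμ.2.trans hb.2⟩, hgμ⟩

section Minimum

variable {ω K T μ : ℝ}

theorem fbarDeriv_neg_of_mem_Ioo (hKT : 0 < K * T) (hμ : μ ∈ Ioo 0 (1 / 2))
    (hgμ : fbarDeriv ω K T μ = 0) {x : ℝ} (hx : x ∈ Ioo 0 μ) :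
    fbarDeriv ω K T x < 0 :=
  hgμ ▸ (strictConcaveOn_fbarDeriv ω hKT).apply_lt_of_lt ⟨hx.1, by linarith [hx.2, hμ.2]⟩
    ⟨by norm_num, le_rfl⟩ (hgμ.trans (fbarDeriv_half ω K T).symm) hx.2 hμ.2

theorem fbarDeriv_pos_of_mem_Ioo (hKT : 0 < K * T) (hμ : μ ∈ Ioo 0 (1 / 2))
    (hgμ : fbarDeriv ω K T μ = 0) {x : ℝ} (hx : x ∈ Ioo μ (1 / 2)) :
    0 < fbarDeriv ω K T x :=
  hgμ ▸ (strictConcaveOn_fbarDeriv ω hKT).lt_apply_of_mem_Ioo ⟨hμ.1, hμ.2.le⟩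
    ⟨by norm_num, le_rfl⟩ (hgμ.trans (fbarDeriv_half ω K T).symm) hx

theorem fbar_lt_of_mem_Icc_half (hKT : 0 < K * T) (hμ : μ ∈ Ioo 0 (1 / 2))
    (hgμ : fbarDeriv ω K T μ = 0) {s : ℝ} (hs : s ∈ Icc 0 (1 / 2)) (hsμ : s ≠ μ) :
    fbar ω K T μ < fbar ω K T s := by
  have hanti : StrictAntiOn (fbar ω K T) (Icc 0 μ) := by
    refine strictAntiOn_of_deriv_neg (convex_Icc _ _) (continuous_fbar ω K T).continuousOn ?_
    rw [interior_Icc]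
    intro x hx
    rw [(hasDerivAt_fbar hx.1 (by linarith [hx.2, hμ.2])).deriv]
    exact fbarDeriv_neg_of_mem_Ioo hKT hμ hgμ hx
  have hmono : StrictMonoOn (fbar ω K T) (Icc μ (1 / 2)) := by
    refine strictMonoOn_of_deriv_pos (convex_Icc _ _) (continuous_fbar ω K T).continuousOn ?_
    rw [interior_Icc]
    intro x hx
    rw [(hasDerivAt_fbar (hμ.1.trans hx.1) (by linarith [hx.2])).deriv]
    exact fbarDeriv_pos_of_mem_Ioo hKT hμ hgμ hx
  exact lt_apply_of_strictAntiOn_of_strictMonoOn hanti hmono hs hsμ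

end Minimum

/-- If `ω > 2KT` then `f̄` is a double-well function: it attains its minimum over `[0,1]`
exactly at two points `μ0 ∈ (0,1/2)` and `μ1 = 1 - μ0`. -/
theorem double_well_of_omega_gt (ω K T : ℝ) (hK : 0 < K) (hT : 0 < T)
    (hω : 2 * K * T < ω) :
    ∃ μ0 ∈ Set.Ioo (0 : ℝ) (1 / 2),
      fbar ω K T μ0 = fbar ω K T (1 - μ0) ∧
      ∀ s ∈ Set.Icc (0 : ℝ) 1, s ≠ μ0 → s ≠ 1 - μ0 →
        fbar ω K T μ0 < fbar ω K T s := by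
  have hKT : 0 < K * T := mul_pos hK hT
  obtain ⟨μ, hμ, hgμ⟩ := exists_fbarDeriv_eq_zero hKT hω
  refine ⟨μ, hμ, (fbar_one_sub ω K T μ).symm, fun s hs hsμ hsμ' => ?_⟩
  rcases le_or_gt s (1 / 2) with hs_le | hs_gt
  · exact fbar_lt_of_mem_Icc_half hKT hμ hgμ ⟨hs.1, hs_le⟩ hsμ
  · rw [← fbar_one_sub ω K T s]
    exact fbar_lt_of_mem_Icc_half hKT hμ hgμ ⟨by linarith [hs.2], by linarith⟩
      fun h => hsμ' (by linarith)
end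

section
/- Let μ0 < μ1 be real numbers and let e0 be a symmetric real 2×2 matrix. Suppose there exist s ∈ ℝ, a ∈ ℝ², and ν ∈ ℝ² such that (μ1−μ0)·e0 + S_s = a ⊗ ν. Then (μ1−μ0)²·det(e0) + s² = 0; in particular det(e0) ≤ 0. -/
open Matrix

/-!
Taking determinants of `(μ1-μ0) e0 + S_s = a ⊗ ν`: the right side is singular, while on the
left the symmetric and skew parts do not interact, so the determinant is
`(μ1-μ0)² det e0 + s²`.
-/

theorem Matrix.IsSymm.det_add_skew_fin_two {R : Type*} [CommRing R]
    {A : Matrix (Fin 2) (Fin 2) R} (hA : A.IsSymm) (s : R) :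
    (A + !![0, s; -s, 0]).det = A.det + s ^ 2 := by
  have hA01 : A 1 0 = A 0 1 := hA.apply 0 1
  simp only [det_fin_two, add_apply, of_apply, cons_val', cons_val_zero, cons_val_one,
    empty_val', cons_val_fin_one]
  linear_combination -s * hA01

/-- If `(μ1-μ0) e0 + S_s = a ⊗ ν` for a symmetric 2×2 matrix `e0`, a skew-symmetric
matrix `S_s = [[0,s],[-s,0]]` and a rank-one matrix `a ⊗ ν`, then
`(μ1-μ0)² det(e0) + s² = 0`; in particular `det(e0) ≤ 0`. -/
theorem rank_one_connection_det (μ0 μ1 : ℝ) (hμ : μ0 < μ1)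
    (e0 : Matrix (Fin 2) (Fin 2) ℝ) (hsym : e0ᵀ = e0)
    (s : ℝ) (a ν : Fin 2 → ℝ)
    (heq : (μ1 - μ0) • e0 + !![(0 : ℝ), s; -s, 0] = vecMulVec a ν) :
    (μ1 - μ0) ^ 2 * e0.det + s ^ 2 = 0 ∧ e0.det ≤ 0 := by
  have hdet : (μ1 - μ0) ^ 2 * e0.det + s ^ 2 = 0 := by
    have hsmul : ((μ1 - μ0) • e0).IsSymm := IsSymm.smul hsym (μ1 - μ0)
    rw [← det_vecMulVec a ν, ← heq, hsmul.det_add_skew_fin_two, det_smul, Fintype.card_fin]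
  have hμ2 : 0 < (μ1 - μ0) ^ 2 := pow_pos (sub_pos.mpr hμ) 2
  exact ⟨hdet, nonpos_of_mul_nonpos_right (by linarith [sq_nonneg s]) hμ2⟩
end

section
/- Let μ0 < μ1 be real numbers and let e0 be a symmetric real 2×2 matrix with det(e0) ≤ 0. Then, setting s := (μ1−μ0)·√(−det(e0)), there exist a ∈ ℝ² and a unit vector ν ∈ ℝ² such that (μ1−μ0)·e0 + S_s = a ⊗ ν. Moreover, for s ∈ ℝ the matrix (μ1−μ0)·e0 + S_s has determinant zero (equivalently, rank at most one) if and only if s = (μ1−μ0)·√(−det(e0)) or s = −(μ1−μ0)·√(−det(e0)). -/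
/-!
By symmetry of `e0`, `det((μ1-μ0) e0 + S_s) = (μ1-μ0)² det e0 + s²`, which vanishes exactly for
`s = ±(μ1-μ0)√(-det e0)`. A 2×2 matrix of determinant zero is an outer product `a ⊗ w`, and
rescaling `a` by `|w|` and `w` by `|w|⁻¹` makes the second factor a unit vector.
-/

open Matrix

namespace Matrix

theorem det_smul_add_skew_fin_two {R : Type*} [CommRing R] (t s : R)
    {e : Matrix (Fin 2) (Fin 2) R} (he : e.IsSymm) :
    (t • e + !![0, s; -s, 0]).det = t ^ 2 * e.det + s ^ 2 := by
  have h10 : e 1 0 = e 0 1 := he.apply 0 1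
  simp only [det_fin_two, add_apply, smul_apply, smul_eq_mul, h10, of_apply, cons_val',
    cons_val_zero, cons_val_one, cons_val_fin_one, add_zero]
  ring

theorem exists_eq_vecMulVec_of_det_eq_zero {M : Matrix (Fin 2) (Fin 2) ℝ} (h : M.det = 0) :
    ∃ a w : Fin 2 → ℝ, M = vecMulVec a w := by
  rw [det_fin_two] at h
  by_cases h0 : M 0 = 0
  · refine ⟨![0, 1], M 1, ?_⟩
    ext i j
    fin_cases i <;> simp [vecMulVec, h0]
  -- `det M = 0` makes row 1 a multiple of the nonzero row 0; the factor is read off by projection.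
  · have hnorm : M 0 ⬝ᵥ M 0 ≠ 0 := dotProduct_self_eq_zero.not.mpr h0
    refine ⟨![1, (M 1 ⬝ᵥ M 0) / (M 0 ⬝ᵥ M 0)], M 0, ?_⟩
    ext i j
    fin_cases i
    · simp [vecMulVec]
    · simp only [vecMulVec, of_apply, Fin.mk_one, cons_val_one, cons_val_zero]
      rw [div_mul_eq_mul_div, eq_div_iff hnorm]
      simp only [dotProduct, Fin.sum_univ_two]
      fin_cases j
      · simp only [Fin.zero_eta]
        linear_combination -M 0 1 * h
      · simp only [Fin.mk_one]
        linear_combination M 0 0 * h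

theorem exists_unit_vecMulVec_eq (a w : Fin 2 → ℝ) :
    ∃ b ν : Fin 2 → ℝ, ν 0 ^ 2 + ν 1 ^ 2 = 1 ∧ vecMulVec a w = vecMulVec b ν := by
  by_cases hw : w = 0
  · exact ⟨0, ![1, 0], by simp, by simp [hw]⟩
  have hpos : 0 < w 0 ^ 2 + w 1 ^ 2 := by
    have hne : w ⬝ᵥ w ≠ 0 := dotProduct_self_eq_zero.not.mpr hw
    simp only [dotProduct, Fin.sum_univ_two, ← sq] at hne
    positivity
  set r := √(w 0 ^ 2 + w 1 ^ 2)
  have hr : r ≠ 0 := (Real.sqrt_pos.mpr hpos).ne'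
  refine ⟨r • a, r⁻¹ • w, ?_, ?_⟩
  · simp only [Pi.smul_apply, smul_eq_mul, mul_pow, ← mul_add, inv_pow,
      Real.sq_sqrt hpos.le, r]
    exact inv_mul_cancel₀ hpos.ne'
  · rw [smul_vecMulVec, vecMulVec_smul, smul_smul, mul_inv_cancel₀ hr, one_smul]

end Matrix

theorem rank_one_connection_exists_general (μ0 μ1 : ℝ)
    (e0 : Matrix (Fin 2) (Fin 2) ℝ) (hsym : e0ᵀ = e0) (hdet : e0.det ≤ 0) :
    (∃ (a ν : Fin 2 → ℝ), (ν 0) ^ 2 + (ν 1) ^ 2 = 1 ∧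
      (μ1 - μ0) • e0 +
          !![(0 : ℝ), (μ1 - μ0) * Real.sqrt (-e0.det);
             -((μ1 - μ0) * Real.sqrt (-e0.det)), 0]
        = vecMulVec a ν) ∧
    ∀ s : ℝ, ((μ1 - μ0) • e0 + !![(0 : ℝ), s; -s, 0]).det = 0 ↔
      s = (μ1 - μ0) * Real.sqrt (-e0.det) ∨ s = -((μ1 - μ0) * Real.sqrt (-e0.det)) := by
  have hsq : ((μ1 - μ0) * √(-e0.det)) ^ 2 = -((μ1 - μ0) ^ 2 * e0.det) := by
    rw [mul_pow, Real.sq_sqrt (neg_nonneg.mpr hdet), mul_neg]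
  have hdet_zero : ∀ s : ℝ, ((μ1 - μ0) • e0 + !![(0 : ℝ), s; -s, 0]).det = 0 ↔
      s = (μ1 - μ0) * √(-e0.det) ∨ s = -((μ1 - μ0) * √(-e0.det)) := by
    intro s
    rw [det_smul_add_skew_fin_two _ _ hsym, ← sq_eq_sq_iff_eq_or_eq_neg, hsq]
    constructor <;> intro h <;> linarith
  refine ⟨?_, hdet_zero⟩
  obtain ⟨a, w, hM⟩ := exists_eq_vecMulVec_of_det_eq_zero ((hdet_zero _).mpr (.inl rfl))
  obtain ⟨b, ν, hν, hw⟩ := exists_unit_vecMulVec_eq a w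
  exact ⟨b, ν, hν, hM.trans hw⟩

/-- If `e0` is a symmetric 2×2 matrix with `det(e0) ≤ 0` and `μ0 < μ1`, then with
`s = (μ1-μ0)√(-det e0)` the matrix `(μ1-μ0) e0 + S_s` is a rank-one (outer) product
`a ⊗ ν` with `ν` a unit vector; moreover for real `s` the matrix `(μ1-μ0) e0 + S_s` has
zero determinant if and only if `s = ±(μ1-μ0)√(-det e0)`. -/
theorem rank_one_connection_exists (μ0 μ1 : ℝ) (hμ : μ0 < μ1)
    (e0 : Matrix (Fin 2) (Fin 2) ℝ) (hsym : e0ᵀ = e0) (hdet : e0.det ≤ 0) :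
    (∃ (a ν : Fin 2 → ℝ), (ν 0) ^ 2 + (ν 1) ^ 2 = 1 ∧
      (μ1 - μ0) • e0 +
          !![(0 : ℝ), (μ1 - μ0) * Real.sqrt (-e0.det);
             -((μ1 - μ0) * Real.sqrt (-e0.det)), 0]
        = vecMulVec a ν) ∧
    ∀ s : ℝ, ((μ1 - μ0) • e0 + !![(0 : ℝ), s; -s, 0]).det = 0 ↔
      s = (μ1 - μ0) * Real.sqrt (-e0.det) ∨ s = -((μ1 - μ0) * Real.sqrt (-e0.det)) :=
  rank_one_connection_exists_general μ0 μ1 e0 hsym hdet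
end

section
/- Let μ0 < μ1 be real numbers and let e0 be the 2×2 matrix with rows (0,1) and (1,0). If s ∈ ℝ, a ∈ ℝ² with a ≠ 0, and a unit vector ν ∈ ℝ² satisfy (μ1−μ0)·e0 + S_s = a ⊗ ν, then ν ∈ {(1,0), (−1,0), (0,1), (0,−1)}; that is, the only admissible interface normals for this lattice misfit are the coordinate directions up to sign. -/
/-! The diagonal of `a ⊗ ν` is that of `(μ1 - μ0) e0 + S_s`, hence zero, so `a i ν i = 0` for
each `i`. If neither coordinate of `ν` vanished, `a` would be zero and so would the off-diagonal
sum `2 (μ1 - μ0)`. Thus one coordinate of the unit vector `ν` is zero and the other is `±1`. -/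

open Matrix

theorem eq_zero_of_vecMulVec_diag_eq_zero {n R : Type*} [MulZeroClass R] [NoZeroDivisors R]
    {a ν : n → R} (hdiag : ∀ i, vecMulVec a ν i i = 0) (hν : ∀ i, ν i ≠ 0) : a = 0 :=
  funext fun i => (mul_eq_zero.mp (hdiag i)).resolve_right (hν i)

theorem eq_coord_unit_of_sq_add_sq_eq_one {ν : Fin 2 → ℝ} (hν : ν 0 ^ 2 + ν 1 ^ 2 = 1)
    (hcoord : ν 0 = 0 ∨ ν 1 = 0) :
    ν = ![1, 0] ∨ ν = ![-1, 0] ∨ ν = ![0, 1] ∨ ν = ![0, -1] := by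
  have hν' : ν = ![ν 0, ν 1] := by ext i; fin_cases i <;> rfl
  rcases hcoord with h0 | h1
  · have : ν 1 = 1 ∨ ν 1 = -1 := sq_eq_one_iff.mp (by rw [h0] at hν; linarith)
    rw [hν', h0]
    rcases this with h | h <;> simp [h]
  · have : ν 0 = 1 ∨ ν 0 = -1 := sq_eq_one_iff.mp (by rw [h1] at hν; linarith)
    rw [hν', h1]
    rcases this with h | h <;> simp [h]

theorem admissible_normals_general (μ0 μ1 : ℝ) (hμ : μ0 < μ1) (s : ℝ) (a ν : Fin 2 → ℝ)
    (hν : (ν 0) ^ 2 + (ν 1) ^ 2 = 1)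
    (heq : (μ1 - μ0) • !![(0 : ℝ), 1; 1, 0] + !![(0 : ℝ), s; -s, 0] = vecMulVec a ν) :
    ν = ![1, 0] ∨ ν = ![-1, 0] ∨ ν = ![0, 1] ∨ ν = ![0, -1] := by
  have hdiag : ∀ i, vecMulVec a ν i i = 0 := by
    intro i; fin_cases i <;> simp [← heq]
  refine eq_coord_unit_of_sq_add_sq_eq_one hν ?_
  by_contra! hν0
  have ha : a = 0 := eq_zero_of_vecMulVec_diag_eq_zero hdiag (by simpa [Fin.forall_fin_two])
  have h01 : μ1 - μ0 + s = 0 := by simpa [ha] using congrFun (congrFun heq 0) 1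
  have h10 : μ1 - μ0 - s = 0 := by simpa [ha, sub_eq_add_neg] using congrFun (congrFun heq 1) 0
  linarith

/-- For the lattice misfit `e0 = [[0,1],[1,0]]`, the only admissible interface normals in
the skew-symmetric rank-one connection `(μ1-μ0) e0 + S_s = a ⊗ ν` (with `a ≠ 0` and `ν`
a unit vector) are the coordinate directions up to sign. -/
theorem admissible_normals (μ0 μ1 : ℝ) (hμ : μ0 < μ1) (s : ℝ) (a ν : Fin 2 → ℝ)
    (ha : a ≠ 0) (hν : (ν 0) ^ 2 + (ν 1) ^ 2 = 1)
    (heq : (μ1 - μ0) • !![(0 : ℝ), 1; 1, 0] + !![(0 : ℝ), s; -s, 0] = vecMulVec a ν) :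
    ν = ![1, 0] ∨ ν = ![-1, 0] ∨ ν = ![0, 1] ∨ ν = ![0, -1] :=
  admissible_normals_general μ0 μ1 hμ s a ν hν heq
end

section
/- Let μ0 < μ1 be real numbers, let W : [μ0,μ1] → [0,∞) be continuous, and let ε > 0. Define φ : [μ0,μ1] → ℝ by φ(s) := ∫_{μ0}^{s} ε/√(ε + W(r)) dr and set T := φ(μ1). Then: (i) φ is strictly increasing and 0 < T ≤ √ε · (μ1−μ0); (ii) the inverse function ψ := φ⁻¹ : [0,T] → [μ0,μ1] is differentiable on (0,T) with ψ′(r) = √(ε + W(ψ(r)))/ε; and (iii) ∫_0^T ( (1/ε)·W(ψ(r)) + ε·ψ′(r)² ) dr ≤ ∫_{μ0}^{μ1} 2·√(ε + W(s)) ds. -/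
/-- The optimal-profile reparametrization `φ(s) = ∫_{μ0}^s ε/√(ε + W(r)) dr`. -/
noncomputable def phiProf (W : ℝ → ℝ) (ε μ0 : ℝ) (s : ℝ) : ℝ :=
  ∫ r in μ0..s, ε / Real.sqrt (ε + W r)

/-!
The density `ε / √(ε + W)` of `φ` is continuous and positive, so `φ` is a strictly increasing
primitive; after extending `W` continuously and boundedly to all of `ℝ` the density is bounded
below, `φ` becomes an order isomorphism of `ℝ`, and its inverse `ψ` solves `ψ' = √(ε + W ∘ ψ) / ε`
by the inverse function theorem. Along this ODE the Modica–Mortola density is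
`W(ψ)/ε + (ε + W(ψ))/ε ≤ 2 √(ε + W(ψ)) ψ'`, and the substitution `s = ψ(r)` turns the integral of
the right-hand side into `∫ 2 √(ε + W)`.
-/

open Set Filter intervalIntegral

theorem surjective_of_le_deriv {f : ℝ → ℝ} (hf : Differentiable ℝ f) {C : ℝ}
    (hC : 0 < C) (hf' : ∀ x, C ≤ deriv f x) : Function.Surjective f := by
  have hgrowth : ∀ ⦃x y⦄, x ≤ y → C * (y - x) ≤ f y - f x :=
    mul_sub_le_image_sub_of_le_deriv hf hf'
  refine hf.continuous.surjective ?_ ?_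
  · refine tendsto_atTop_mono' atTop (eventually_atTop.2 ⟨0, fun y hy => ?_⟩)
      (tendsto_atTop_add_const_right _ (f 0) (tendsto_id.const_mul_atTop hC))
    dsimp only [id]
    linarith [hgrowth hy]
  · refine tendsto_atBot_mono' atBot (eventually_atBot.2 ⟨0, fun x hx => ?_⟩)
      (tendsto_atBot_add_const_right _ (f 0) (tendsto_id.const_mul_atBot hC))
    dsimp only [id]
    linarith [hgrowth hx]

theorem exists_bounded_nonneg_continuous_extension_Icc {a b : ℝ} (hab : a ≤ b)
    {W : ℝ → ℝ} (hW : ContinuousOn W (Icc a b)) (hW0 : ∀ s ∈ Icc a b, 0 ≤ W s) :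
    ∃ V : ℝ → ℝ, Continuous V ∧ (∀ x, 0 ≤ V x) ∧ (∃ M, ∀ x, V x ≤ M) ∧ EqOn W V (Icc a b) := by
  have hWr : Continuous ((Icc a b).domRestrict W) := continuousOn_iff_continuous_domRestrict.1 hW
  refine ⟨IccExtend hab ((Icc a b).domRestrict W), hWr.Icc_extend',
    fun x => hW0 _ (projIcc a b hab x).2, ?_,
    fun s hs => (IccExtend_of_mem hab ((Icc a b).domRestrict W) hs).symm⟩
  obtain ⟨M, hM⟩ := (isCompact_range hWr).bddAbove
  exact ⟨M, fun x => hM (IccExtend_range hab _ ▸ mem_range_self x)⟩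

theorem phiProf_eqOn {W V : ℝ → ℝ} {ε μ0 μ1 : ℝ} (hWV : EqOn W V (Icc μ0 μ1)) :
    EqOn (phiProf W ε μ0) (phiProf V ε μ0) (Icc μ0 μ1) := fun s hs =>
  integral_congr fun r hr => by
    rw [uIcc_of_le hs.1] at hr
    simp only [hWV ⟨hr.1, hr.2.trans hs.2⟩]

section GlobalPotential

variable {V : ℝ → ℝ} {ε : ℝ}

theorem continuous_profileDensity (hV : Continuous V) (hV0 : ∀ x, 0 ≤ V x) (hε : 0 < ε) :
    Continuous fun r => ε / √(ε + V r) :=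
  continuous_const.div (continuous_const.add hV).sqrt fun r =>
    (Real.sqrt_pos.2 (by linarith [hV0 r])).ne'

theorem hasDerivAt_phiProf (hV : Continuous V) (hV0 : ∀ x, 0 ≤ V x) (hε : 0 < ε) (μ0 s : ℝ) :
    HasDerivAt (phiProf V ε μ0) (ε / √(ε + V s)) s :=
  ((continuous_profileDensity hV hV0 hε).integral_hasStrictDerivAt μ0 s).hasDerivAt

theorem strictMono_phiProf (hV : Continuous V) (hV0 : ∀ x, 0 ≤ V x) (hε : 0 < ε) (μ0 : ℝ) :
    StrictMono (phiProf V ε μ0) :=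
  strictMono_of_deriv_pos fun s => by
    rw [(hasDerivAt_phiProf hV hV0 hε μ0 s).deriv]
    exact div_pos hε (Real.sqrt_pos.2 (by linarith [hV0 s]))

theorem phiProf_surjective (hV : Continuous V) (hV0 : ∀ x, 0 ≤ V x) {M : ℝ}
    (hVM : ∀ x, V x ≤ M) (hε : 0 < ε) (μ0 : ℝ) : Function.Surjective (phiProf V ε μ0) := by
  have hM : 0 < ε + M := by linarith [hV0 0, hVM 0]
  refine surjective_of_le_deriv
    (fun s => (hasDerivAt_phiProf hV hV0 hε μ0 s).differentiableAt)
    (div_pos hε (Real.sqrt_pos.2 hM)) fun s => ?_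
  rw [(hasDerivAt_phiProf hV hV0 hε μ0 s).deriv]
  gcongr
  · exact Real.sqrt_pos.2 (by linarith [hV0 s])
  · exact hVM s

theorem phiProf_le_sqrt_mul (hV : Continuous V) (hV0 : ∀ x, 0 ≤ V x) (hε : 0 < ε) {μ0 s : ℝ}
    (hs : μ0 ≤ s) : phiProf V ε μ0 s ≤ √ε * (s - μ0) := by
  have hdensity : ∀ r, ε / √(ε + V r) ≤ √ε := fun r =>
    calc ε / √(ε + V r) ≤ ε / √ε := by gcongr; linarith [hV0 r]
      _ = √ε := Real.div_sqrt
  calc phiProf V ε μ0 s ≤ ∫ _ in μ0..s, √ε :=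
        integral_mono_on hs ((continuous_profileDensity hV hV0 hε).intervalIntegrable _ _)
          intervalIntegrable_const fun r _ => hdensity r
    _ = √ε * (s - μ0) := by rw [integral_const, smul_eq_mul, mul_comm]

noncomputable def phiProfOrderIso (hV : Continuous V) (hV0 : ∀ x, 0 ≤ V x) {M : ℝ}
    (hVM : ∀ x, V x ≤ M) (hε : 0 < ε) (μ0 : ℝ) : ℝ ≃o ℝ :=
  StrictMono.orderIsoOfSurjective _ (strictMono_phiProf hV hV0 hε μ0)
    (phiProf_surjective hV hV0 hVM hε μ0)

theorem hasDerivAt_phiProfOrderIso_symm (hV : Continuous V) (hV0 : ∀ x, 0 ≤ V x) {M : ℝ}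
    (hVM : ∀ x, V x ≤ M) (hε : 0 < ε) (μ0 r : ℝ) :
    HasDerivAt (phiProfOrderIso hV hV0 hVM hε μ0).symm
      (√(ε + V ((phiProfOrderIso hV hV0 hVM hε μ0).symm r)) / ε) r := by
  set e := phiProfOrderIso hV hV0 hVM hε μ0
  have hpos : 0 < √(ε + V (e.symm r)) := Real.sqrt_pos.2 (by linarith [hV0 (e.symm r)])
  simpa only [inv_div] using HasDerivAt.of_local_left_inverse e.symm.continuous.continuousAt
    (hasDerivAt_phiProf hV hV0 hε μ0 (e.symm r)) (div_pos hε hpos).ne'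
    (Eventually.of_forall e.apply_symm_apply)

end GlobalPotential

theorem modicaMortola_density_le {ε w : ℝ} (hε : 0 < ε) (hw : 0 ≤ w) :
    1 / ε * w + ε * (√(ε + w) / ε) ^ 2 ≤ 2 * √(ε + w) * (√(ε + w) / ε) := by
  have hsq : √(ε + w) ^ 2 = ε + w := Real.sq_sqrt (by linarith)
  calc 1 / ε * w + ε * (√(ε + w) / ε) ^ 2 = (2 * w + ε) / ε := by
        rw [div_pow, hsq]; field_simp; ring
    _ ≤ 2 * (ε + w) / ε := by gcongr; linarith
    _ = 2 * √(ε + w) * (√(ε + w) / ε) := by rw [mul_assoc, ← mul_div_assoc, ← sq, hsq]; ring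

theorem integral_modicaMortola_le {V ψ : ℝ → ℝ} (hV : Continuous V) (hV0 : ∀ x, 0 ≤ V x)
    {ε a b : ℝ} (hε : 0 < ε) (hab : a ≤ b)
    (hψ : ∀ r, HasDerivAt ψ (√(ε + V (ψ r)) / ε) r) :
    ∫ r in a..b, (1 / ε * V (ψ r) + ε * (deriv ψ r) ^ 2)
      ≤ ∫ s in ψ a..ψ b, 2 * √(ε + V s) := by
  have hderiv : deriv ψ = fun r => √(ε + V (ψ r)) / ε := funext fun r => (hψ r).deriv
  have hVψ : Continuous fun r => V (ψ r) :=
    hV.comp (continuous_iff_continuousAt.2 fun r => (hψ r).continuousAt)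
  have hψ' : Continuous fun r => √(ε + V (ψ r)) / ε :=
    (continuous_const.add hVψ).sqrt.div_const ε
  have hsubst : ∫ r in a..b, 2 * √(ε + V (ψ r)) * (√(ε + V (ψ r)) / ε)
      = ∫ s in ψ a..ψ b, 2 * √(ε + V s) :=
    integral_comp_mul_deriv (g := fun s => 2 * √(ε + V s)) (fun r _ => hψ r) hψ'.continuousOn
      (continuous_const.mul (continuous_const.add hV).sqrt)
  rw [hderiv, ← hsubst]
  refine integral_mono_on hab ?_ ?_ fun r _ => modicaMortola_density_le hε (hV0 (ψ r))
  · exact ((continuous_const.mul hVψ).add (continuous_const.mul (hψ'.pow 2))).intervalIntegrable _ _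
  · exact ((continuous_const.mul (continuous_const.add hVψ).sqrt).mul hψ').intervalIntegrable _ _

/-- Optimal-profile construction: `φ` is strictly increasing with
`0 < T := φ(μ1) ≤ √ε (μ1-μ0)`, its inverse `ψ` solves `ψ' = √(ε + W(ψ))/ε` on `(0,T)`,
and the transition profile `ψ` has Modica–Mortola energy at most
`∫_{μ0}^{μ1} 2√(ε + W)`. -/
theorem optimal_profile (μ0 μ1 : ℝ) (hμ : μ0 < μ1) (W : ℝ → ℝ)
    (hW : ContinuousOn W (Set.Icc μ0 μ1))
    (hWnonneg : ∀ s ∈ Set.Icc μ0 μ1, 0 ≤ W s)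
    (ε : ℝ) (hε : 0 < ε) :
    StrictMonoOn (phiProf W ε μ0) (Set.Icc μ0 μ1) ∧
    (0 < phiProf W ε μ0 μ1 ∧ phiProf W ε μ0 μ1 ≤ Real.sqrt ε * (μ1 - μ0)) ∧
    ∃ ψ : ℝ → ℝ,
      (∀ s ∈ Set.Icc μ0 μ1, ψ (phiProf W ε μ0 s) = s) ∧
      (∀ r ∈ Set.Icc 0 (phiProf W ε μ0 μ1), phiProf W ε μ0 (ψ r) = r) ∧
      (∀ r ∈ Set.Ioo 0 (phiProf W ε μ0 μ1),
        HasDerivAt ψ (Real.sqrt (ε + W (ψ r)) / ε) r) ∧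
      (∫ r in (0 : ℝ)..(phiProf W ε μ0 μ1),
          ((1 / ε) * W (ψ r) + ε * (deriv ψ r) ^ 2))
        ≤ ∫ s in μ0..μ1, 2 * Real.sqrt (ε + W s) := by
  obtain ⟨V, hV, hV0, ⟨M, hVM⟩, hWV⟩ :=
    exists_bounded_nonneg_continuous_extension_Icc hμ.le hW hWnonneg
  have hφ := phiProf_eqOn (ε := ε) hWV
  set e := phiProfOrderIso hV hV0 hVM hε μ0
  have he0 : e μ0 = 0 := integral_same
  have hT : phiProf W ε μ0 μ1 = e μ1 := hφ (right_mem_Icc.2 hμ.le)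
  have hψ_mem : ∀ r ∈ Icc 0 (e μ1), e.symm r ∈ Icc μ0 μ1 := fun r hr =>
    ⟨e.le_symm_apply.2 (he0 ▸ hr.1), e.symm_apply_le.2 hr.2⟩
  have hWVψ : EqOn (fun r => W (e.symm r)) (fun r => V (e.symm r)) (uIcc 0 (e μ1)) :=
    fun r hr => hWV (hψ_mem r (uIcc_of_le (he0 ▸ e.monotone hμ.le) ▸ hr))
  refine ⟨(strictMono_phiProf hV hV0 hε μ0).strictMonoOn _ |>.congr hφ.symm,
    ⟨hT ▸ he0 ▸ e.strictMono hμ, hT ▸ phiProf_le_sqrt_mul hV hV0 hε hμ.le⟩,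
    e.symm, fun s hs => hφ hs ▸ e.symm_apply_apply s,
    fun r hr => (hφ (hψ_mem r (hT ▸ hr))).trans (e.apply_symm_apply r), fun r hr => ?_, ?_⟩
  · rw [hWV (hψ_mem r (Ioo_subset_Icc_self (hT ▸ hr)))]
    exact hasDerivAt_phiProfOrderIso_symm hV hV0 hVM hε μ0 r
  · have hψ := hasDerivAt_phiProfOrderIso_symm hV hV0 hVM hε μ0
    calc ∫ r in (0 : ℝ)..phiProf W ε μ0 μ1, (1 / ε * W (e.symm r) + ε * deriv e.symm r ^ 2)
        = ∫ r in (0 : ℝ)..e μ1, (1 / ε * V (e.symm r) + ε * deriv e.symm r ^ 2) := by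
          rw [hT]; exact integral_congr fun r hr => by simp only [hWVψ hr]
      _ ≤ ∫ s in e.symm 0..e.symm (e μ1), 2 * √(ε + V s) :=
          integral_modicaMortola_le hV hV0 hε (he0 ▸ e.monotone hμ.le) hψ
      _ = ∫ s in μ0..μ1, 2 * √(ε + W s) := by
          rw [← he0, e.symm_apply_apply, e.symm_apply_apply]
          exact integral_congr fun s hs => by simp only [hWV (uIcc_of_le hμ.le ▸ hs)]
end
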